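/- arXiv:1501.02781 — 2 statements merged into one kernel-verified Lean document; each statement's English description precedes it below -/
import Mathlib

section
/- Define \tilde\Omega(R e^{i\theta}) = (T(R^{-2}-1)/(1-t^2)) (t^2 - R^2 + (R^2-1) t \cos(2\theta)) - 2T\log R for R > \sqrt t and 0<t<1, T>0. Then \tilde\Omega(Re^{i\theta}) \ge 0 with equality if and only if R = 1. -/
/-!
Substituting `x = R²`, the potential splits as
`T f(x) + T t (x - 1)² (1 - cos 2θ) / (x (1 - t²))` with
`f(x) = (x + t - 1 - t/x)/(1 + t) - log x`. The angular term is nonnegative, and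
`f'(x) = (x - 1)(x - t)/((1 + t) x²)`, so on `x > t` the function `f` decreases to its
value `f(1) = 0` and increases afterwards; thus `f(x) > 0` for `x ≠ 1`.
-/

open Real Set

noncomputable def effectivePotential (t T R θ : ℝ) : ℝ :=
  T * (R⁻¹ ^ 2 - 1) / (1 - t ^ 2) * (t ^ 2 - R ^ 2 + (R ^ 2 - 1) * t * cos (2 * θ))
    - 2 * T * log R

noncomputable def radialPotential (t x : ℝ) : ℝ :=
  (x + t - 1 - t * x⁻¹) / (1 + t) - log x

section radialPotential

variable {t x : ℝ}

@[simp]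
lemma radialPotential_one (t : ℝ) : radialPotential t 1 = 0 := by
  simp [radialPotential]

lemma hasDerivAt_radialPotential (ht : 1 + t ≠ 0) (hx : x ≠ 0) :
    HasDerivAt (radialPotential t) ((x - 1) * (x - t) / ((1 + t) * x ^ 2)) x := by
  have h : HasDerivAt (radialPotential t) ((1 - t * -(x ^ 2)⁻¹) / (1 + t) - x⁻¹) x :=
    (((((hasDerivAt_id x).add_const t).sub_const 1).sub
      ((hasDerivAt_inv hx).const_mul t)).div_const (1 + t)).sub (hasDerivAt_log hx)
  exact h.congr_deriv (by field_simp; ring)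

lemma radialPotential_pos (ht : -1 < t) (ht1 : t < 1) (hx : 0 < x) (htx : t < x) (hx1 : x ≠ 1) :
    0 < radialPotential t x := by
  have h1t : 0 < 1 + t := by linarith
  have hderiv {y : ℝ} (hy : 0 < y) := hasDerivAt_radialPotential (t := t) h1t.ne' hy.ne'
  have hcont {a : ℝ} (ha : 0 < a) : ContinuousOn (radialPotential t) (Ici a) :=
    fun y hy ↦ (hderiv (ha.trans_le hy)).continuousAt.continuousWithinAt
  rcases hx1.lt_or_gt with hlt | hgt
  · have anti : StrictAntiOn (radialPotential t) (Icc x 1) := by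
      refine strictAntiOn_of_deriv_neg (convex_Icc x 1) ((hcont hx).mono Icc_subset_Ici_self) ?_
      intro y hy
      rw [interior_Icc] at hy
      rw [(hderiv (hx.trans hy.1)).deriv]
      exact div_neg_of_neg_of_pos (mul_neg_of_neg_of_pos (by linarith [hy.2]) (by linarith [hy.1]))
        (mul_pos h1t (pow_pos (hx.trans hy.1) 2))
    simpa using anti ⟨le_rfl, hlt.le⟩ ⟨hlt.le, le_rfl⟩ hlt
  · have mono : StrictMonoOn (radialPotential t) (Ici 1) := by
      refine strictMonoOn_of_deriv_pos (convex_Ici 1) (hcont one_pos) ?_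
      intro y hy
      rw [interior_Ici] at hy
      rw [(hderiv (one_pos.trans hy)).deriv]
      exact div_pos (mul_pos (by linarith [mem_Ioi.1 hy]) (by linarith [mem_Ioi.1 hy]))
        (mul_pos h1t (pow_pos (one_pos.trans hy) 2))
    simpa using mono (mem_Ici.2 le_rfl) hgt.le hgt

lemma radialPotential_nonneg (ht : -1 < t) (ht1 : t < 1) (hx : 0 < x) (htx : t < x) :
    0 ≤ radialPotential t x := by
  rcases eq_or_ne x 1 with rfl | hx1
  · simp
  · exact (radialPotential_pos ht ht1 hx htx hx1).le

lemma radialPotential_eq_zero_iff (ht : -1 < t) (ht1 : t < 1) (hx : 0 < x) (htx : t < x) :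
    radialPotential t x = 0 ↔ x = 1 := by
  refine ⟨fun h ↦ ?_, fun h ↦ h ▸ radialPotential_one t⟩
  by_contra hx1
  exact (radialPotential_pos ht ht1 hx htx hx1).ne' h

end radialPotential

lemma effectivePotential_eq {t T R : ℝ} (θ : ℝ) (ht : 1 - t ^ 2 ≠ 0) (hR : 0 < R) :
    effectivePotential t T R θ = T * radialPotential t (R ^ 2)
      + T * t * (R ^ 2 - 1) ^ 2 / (R ^ 2 * (1 - t ^ 2)) * (1 - cos (2 * θ)) := by
  have h1t : 1 + t ≠ 0 := fun h ↦ ht (by linear_combination (1 - t) * h)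
  rw [effectivePotential, radialPotential, log_pow, Nat.cast_ofNat]
  field_simp
  ring

/-- The effective potential in Joukowsky coordinates,
`Ω̃(Re^{iθ}) = (T(R⁻²-1)/(1-t²))(t² - R² + (R²-1)t cos 2θ) - 2T log R`,
is nonnegative on `{R > √t}`, with equality if and only if `R = 1`. -/
theorem stmt13 (t T : ℝ) (ht0 : 0 < t) (ht1 : t < 1) (hT : 0 < T)
    (R θ : ℝ) (hR : Real.sqrt t < R) :
    0 ≤ T * (R⁻¹ ^ 2 - 1) / (1 - t ^ 2)
          * (t ^ 2 - R ^ 2 + (R ^ 2 - 1) * t * Real.cos (2 * θ)) - 2 * T * Real.log R ∧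
    (T * (R⁻¹ ^ 2 - 1) / (1 - t ^ 2)
          * (t ^ 2 - R ^ 2 + (R ^ 2 - 1) * t * Real.cos (2 * θ)) - 2 * T * Real.log R = 0
      ↔ R = 1) := by
  change 0 ≤ effectivePotential t T R θ ∧ (effectivePotential t T R θ = 0 ↔ R = 1)
  have hR0 : 0 < R := (sqrt_nonneg t).trans_lt hR
  have htR : t < R ^ 2 := (sqrt_lt' hR0).1 hR
  have hR2 : 0 < R ^ 2 := by positivity
  have h1t : 0 < 1 - t ^ 2 := by nlinarith
  have hrad : 0 ≤ T * radialPotential t (R ^ 2) :=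
    mul_nonneg hT.le (radialPotential_nonneg (by linarith) ht1 hR2 htR)
  have hang : 0 ≤ T * t * (R ^ 2 - 1) ^ 2 / (R ^ 2 * (1 - t ^ 2)) * (1 - cos (2 * θ)) :=
    mul_nonneg (by positivity) (sub_nonneg.2 (cos_le_one _))
  rw [effectivePotential_eq θ h1t.ne' hR0, add_eq_zero_iff_of_nonneg hrad hang]
  refine ⟨add_nonneg hrad hang, fun h ↦ ?_, fun h ↦ by simp [h]⟩
  have hrad0 := (mul_eq_zero.1 h.1).resolve_left hT.ne'
  rwa [radialPotential_eq_zero_iff (by linarith) ht1 hR2 htR,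
    pow_eq_one_iff_of_nonneg hR0.le two_ne_zero] at hrad0
end

section
/- Let p_j, j\ge 0, be polynomials with complex coefficients satisfying the recurrences z p_k = r_{k+1} p_{k+1} + t r_k p_{k-1} and (1/N)\partial_z(p_k e^{Ntz^2/2}) = (t r_{k+1} p_{k+1} + r_k p_{k-1}) e^{Ntz^2/2}, with r_k=\sqrt{k/(N(1-t^2))}, p_{-1}=0. Define \mathcal{K}_n(z,w) = \sum_{j=0}^{n-1} p_j(z)\overline{p_j(w)} \exp(-N(z\bar w - (t/2)z^2 - (t/2)\bar w^2)). Then (1/N)\,\partial_z \mathcal{K}_n(z,w) = \sqrt{T/(1-t^2)}\,(t\, p_n(z)\overline{p_{n-1}(w)} - p_{n-1}(z)\overline{p_n(w)})\exp(-N(z\bar w - (t/2)z^2 - (t/2)\bar w^2)), where T = n/N. -/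
open scoped ComplexConjugate

/-!
Write `e(x) = exp(N t x² / 2)`, so that the weight of `𝒦_n` is `e(z) e^{-N w̄ z} e(w̄)`. The second
recurrence differentiates `p_j e`, the conjugated first recurrence absorbs the factor `w̄` coming
from `e^{-N w̄ z}`, and the `j`-th term of `(1/N) ∂_z 𝒦_n` becomes `A_{j+1} - A_j` times the weight,
with `A_j = r_j (t p_j(z) conj p_{j-1}(w) - p_{j-1}(z) conj p_j(w))`. The sum telescopes to `A_n`
because `r_0 = 0`, and `r_n = √(T/(1-t²))`.
-/

namespace ChristoffelDarboux

section Algebra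

variable {R : Type*} [CommRing R] (t : R) (r P Q : ℕ → R)

def cdTerm (j : ℕ) : R := r j * (t * P j * Q (j - 1) - P (j - 1) * Q j)

theorem mul_eq_cdTerm_succ_sub {b : R} {j : ℕ}
    (hQ : b * Q j = r (j + 1) * Q (j + 1) + t * r j * Q (j - 1)) :
    (t * r (j + 1) * P (j + 1) + r j * P (j - 1) - b * P j) * Q j
      = cdTerm t r P Q (j + 1) - cdTerm t r P Q j := by
  simp only [cdTerm, Nat.add_sub_cancel]
  linear_combination (-P j) * hQ

theorem sum_range_mul_eq_cdTerm {b : R} (hr0 : r 0 = 0)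
    (hQ : ∀ j, b * Q j = r (j + 1) * Q (j + 1) + t * r j * Q (j - 1)) (n : ℕ) :
    ∑ j ∈ Finset.range n, (t * r (j + 1) * P (j + 1) + r j * P (j - 1) - b * P j) * Q j
      = cdTerm t r P Q n := by
  simp_rw [mul_eq_cdTerm_succ_sub t r P Q (hQ _)]
  rw [Finset.sum_range_sub, sub_eq_self]
  simp [cdTerm, hr0]

end Algebra

theorem hasDerivAt_mul_cexp_mul {g : ℂ → ℂ} {g' z : ℂ} (hg : HasDerivAt g g' z) (c : ℂ) :
    HasDerivAt (fun x => g x * Complex.exp (c * x)) ((g' + c * g z) * Complex.exp (c * z)) z := by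
  have hexp : HasDerivAt (fun x => Complex.exp (c * x)) (Complex.exp (c * z) * c) z := by
    simpa using ((hasDerivAt_id z).const_mul c).cexp
  refine (hg.mul hexp).congr_deriv ?_
  ring

theorem cexp_kernel_weight (N t : ℝ) (w x : ℂ) :
    Complex.exp (-(N : ℂ) * (x * conj w - (t : ℂ) / 2 * x ^ 2 - (t : ℂ) / 2 * (conj w) ^ 2))
      = Complex.exp ((N : ℂ) * t * x ^ 2 / 2) * Complex.exp (-(N : ℂ) * conj w * x)
        * Complex.exp ((N : ℂ) * t * (conj w) ^ 2 / 2) := by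
  rw [← Complex.exp_add, ← Complex.exp_add]
  congr 1
  ring

theorem hasDerivAt_mul_kernel_weight {N t : ℝ} {P : ℂ → ℂ} {D z : ℂ}
    (hP : HasDerivAt (fun x => P x * Complex.exp ((N : ℂ) * t * x ^ 2 / 2))
      ((N : ℂ) * D * Complex.exp ((N : ℂ) * t * z ^ 2 / 2)) z) (c w : ℂ) :
    HasDerivAt (fun x => P x * c
        * Complex.exp (-(N : ℂ) * (x * conj w - (t : ℂ) / 2 * x ^ 2 - (t : ℂ) / 2 * (conj w) ^ 2)))
      ((N : ℂ) * ((D - conj w * P z) * c)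
        * Complex.exp (-(N : ℂ) * (z * conj w - (t : ℂ) / 2 * z ^ 2
            - (t : ℂ) / 2 * (conj w) ^ 2))) z := by
  have h := (hasDerivAt_mul_cexp_mul hP (-(N : ℂ) * conj w)).mul_const
    (c * Complex.exp ((N : ℂ) * t * (conj w) ^ 2 / 2))
  have hfun : (fun x => P x * c * Complex.exp (-(N : ℂ) * (x * conj w - (t : ℂ) / 2 * x ^ 2
      - (t : ℂ) / 2 * (conj w) ^ 2))) = fun x => P x * Complex.exp ((N : ℂ) * t * x ^ 2 / 2)
        * Complex.exp (-(N : ℂ) * conj w * x) * (c * Complex.exp ((N : ℂ) * t * (conj w) ^ 2 / 2)) := by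
    funext x
    rw [cexp_kernel_weight]
    ring
  rw [hfun]
  refine h.congr_deriv ?_
  rw [cexp_kernel_weight]
  ring

end ChristoffelDarboux

open ChristoffelDarboux in
theorem stmt17_general (t N : ℝ) (hN : 0 < N)
    (p : ℕ → Polynomial ℂ)
    (r : ℕ → ℝ) (hr : ∀ k : ℕ, r k = Real.sqrt (k / (N * (1 - t ^ 2))))
    (hrec1 : ∀ (k : ℕ) (z : ℂ), z * (p k).eval z
      = ((r (k + 1) : ℝ) : ℂ) * (p (k + 1)).eval z
        + (t : ℂ) * ((r k : ℝ) : ℂ) * (p (k - 1)).eval z)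
    (hrec2 : ∀ (k : ℕ) (z : ℂ),
      (1 / (N : ℂ)) * deriv (fun z : ℂ => (p k).eval z * Complex.exp ((N : ℂ) * t * z ^ 2 / 2)) z
      = ((t : ℂ) * ((r (k + 1) : ℝ) : ℂ) * (p (k + 1)).eval z
          + ((r k : ℝ) : ℂ) * (p (k - 1)).eval z) * Complex.exp ((N : ℂ) * t * z ^ 2 / 2))
    (n : ℕ) (T : ℝ) (hT : T = n / N) (w z : ℂ) :
    (1 / (N : ℂ)) * deriv (fun z : ℂ => ∑ j ∈ Finset.range n,
        (p j).eval z * conj ((p j).eval w)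
          * Complex.exp (-(N : ℂ) * (z * conj w - (t : ℂ) / 2 * z ^ 2
              - (t : ℂ) / 2 * (conj w) ^ 2))) z
      = ((Real.sqrt (T / (1 - t ^ 2)) : ℝ) : ℂ)
        * ((t : ℂ) * (p n).eval z * conj ((p (n - 1)).eval w)
            - (p (n - 1)).eval z * conj ((p n).eval w))
        * Complex.exp (-(N : ℂ) * (z * conj w - (t : ℂ) / 2 * z ^ 2
            - (t : ℂ) / 2 * (conj w) ^ 2)) := by
  have hNz : (N : ℂ) ≠ 0 := Complex.ofReal_ne_zero.mpr hN.ne'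
  have hpe : ∀ j, HasDerivAt (fun x => (p j).eval x * Complex.exp ((N : ℂ) * t * x ^ 2 / 2))
      ((N : ℂ) * ((t : ℂ) * ((r (j + 1) : ℝ) : ℂ) * (p (j + 1)).eval z
          + ((r j : ℝ) : ℂ) * (p (j - 1)).eval z) * Complex.exp ((N : ℂ) * t * z ^ 2 / 2)) z := by
    intro j
    have hd : DifferentiableAt ℂ
        (fun x => (p j).eval x * Complex.exp ((N : ℂ) * t * x ^ 2 / 2)) z := by fun_prop
    refine hd.hasDerivAt.congr_deriv ?_
    rw [mul_assoc, ← hrec2 j z, ← mul_assoc, mul_one_div_cancel hNz, one_mul]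
  have hrec1w : ∀ j, conj w * conj ((p j).eval w)
      = ((r (j + 1) : ℝ) : ℂ) * conj ((p (j + 1)).eval w)
        + (t : ℂ) * ((r j : ℝ) : ℂ) * conj ((p (j - 1)).eval w) := by
    intro j
    simpa only [map_mul, map_add, Complex.conj_ofReal] using congrArg conj (hrec1 j w)
  rw [(HasDerivAt.fun_sum fun j _ => hasDerivAt_mul_kernel_weight (hpe j) _ w).deriv,
    ← Finset.sum_mul, ← Finset.mul_sum,
    sum_range_mul_eq_cdTerm (t : ℂ) (fun k => (r k : ℂ)) (fun k => (p k).eval z)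
      (fun k => conj ((p k).eval w)) (by simp [hr 0]) hrec1w, cdTerm, hr n, hT, div_div]
  field_simp

/-- Christoffel–Darboux type identity for the pre-kernel. Let `p_j` be polynomials
satisfying the recurrences `z p_k = r_{k+1} p_{k+1} + t r_k p_{k-1}` and
`(1/N) ∂_z (p_k e^{Ntz²/2}) = (t r_{k+1} p_{k+1} + r_k p_{k-1}) e^{Ntz²/2}`,
with `r_k = √(k/(N(1-t²)))` (so `r_0 = 0`, accommodating `p_{-1} = 0`).
With `𝒦_n(z,w) = ∑_{j<n} p_j(z) conj(p_j(w)) exp(-N(z w̄ - (t/2)z² - (t/2)w̄²))`,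
one has `(1/N) ∂_z 𝒦_n(z,w) = √(T/(1-t²)) (t p_n(z) conj(p_{n-1}(w))
 - p_{n-1}(z) conj(p_n(w))) exp(-N(z w̄ - (t/2)z² - (t/2)w̄²))`, `T = n/N`. -/
theorem stmt17 (t N : ℝ) (ht0 : 0 ≤ t) (ht1 : t < 1) (hN : 0 < N)
    (p : ℕ → Polynomial ℂ)
    (r : ℕ → ℝ) (hr : ∀ k : ℕ, r k = Real.sqrt (k / (N * (1 - t ^ 2))))
    (hrec1 : ∀ (k : ℕ) (z : ℂ), z * (p k).eval z
      = ((r (k + 1) : ℝ) : ℂ) * (p (k + 1)).eval z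
        + (t : ℂ) * ((r k : ℝ) : ℂ) * (p (k - 1)).eval z)
    (hrec2 : ∀ (k : ℕ) (z : ℂ),
      (1 / (N : ℂ)) * deriv (fun z : ℂ => (p k).eval z * Complex.exp ((N : ℂ) * t * z ^ 2 / 2)) z
      = ((t : ℂ) * ((r (k + 1) : ℝ) : ℂ) * (p (k + 1)).eval z
          + ((r k : ℝ) : ℂ) * (p (k - 1)).eval z) * Complex.exp ((N : ℂ) * t * z ^ 2 / 2))
    (n : ℕ) (hn : 0 < n) (T : ℝ) (hT : T = n / N) (w z : ℂ) :
    (1 / (N : ℂ)) * deriv (fun z : ℂ => ∑ j ∈ Finset.range n,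
        (p j).eval z * conj ((p j).eval w)
          * Complex.exp (-(N : ℂ) * (z * conj w - (t : ℂ) / 2 * z ^ 2
              - (t : ℂ) / 2 * (conj w) ^ 2))) z
      = ((Real.sqrt (T / (1 - t ^ 2)) : ℝ) : ℂ)
        * ((t : ℂ) * (p n).eval z * conj ((p (n - 1)).eval w)
            - (p (n - 1)).eval z * conj ((p n).eval w))
        * Complex.exp (-(N : ℂ) * (z * conj w - (t : ℂ) / 2 * z ^ 2
            - (t : ℂ) / 2 * (conj w) ^ 2)) :=
  stmt17_general t N hN p r hr hrec1 hrec2 n T hT w z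
end
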